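/- Let u₁, u₂, u₃, u₄, u₅ : ℝ → ℝ be differentiable functions satisfying for all t ∈ ℝ: u₁′ = −u₃u₅, u₂′ = u₃u₄, u₃′ = u₁u₅ − u₂u₄, u₄′ = u₂u₃, u₅′ = −u₁u₃. Let U(t) = ∫₀ᵗ u₃(τ) dτ, A = (u₁(0)+u₅(0))² + (u₂(0)−u₄(0))², and B = (u₁(0)−u₅(0))² + (u₂(0)+u₄(0))², and assume A > 0 and B > 0. Define y(t) = 2U(t) + (1/2)·ln(B/A). Then y is twice differentiable and satisfies for all t ∈ ℝ: y″(t) = −√(AB)·sinh(y(t)), with y(0) = (1/2)·ln(B/A) and y′(0) = 2u₃(0). -/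

import Mathlib

/-! Along a solution, `u₁ + u₅` and `u₂ - u₄` solve `f' = -u₃ f`, while `u₁ - u₅` and
`u₂ + u₄` solve `f' = u₃ f`. Hence `(u₁ + u₅)² + (u₂ - u₄)² = A e^{-2U}` and
`(u₁ - u₅)² + (u₂ + u₄)² = B e^{2U}`, and their difference is `4 (u₁u₅ - u₂u₄) = 2 u₃'`.
The shift `(1/2) ln (B/A)` in `y` turns both coefficients into `√(AB)`, so the two sums are
`√(AB) e^{∓y}` and `y'' = 2 u₃' = -√(AB) sinh y`. -/

open Real

theorem eq_mul_exp_sub_of_hasDerivAt {f g V : ℝ → ℝ} (hf : ∀ t, HasDerivAt f (g t * f t) t)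
    (hV : ∀ t, HasDerivAt V (g t) t) (s t : ℝ) : f t = f s * exp (V t - V s) := by
  have hconst : ∀ r, HasDerivAt (fun r => f r * exp (-V r)) 0 r := fun r =>
    ((hf r).mul (hV r).neg.exp).congr_deriv (by ring)
  have := is_const_of_deriv_eq_zero (fun r => (hconst r).differentiableAt)
    (fun r => (hconst r).deriv) t s
  calc f t = f t * exp (-V t) * exp (V t) := by rw [mul_assoc, ← exp_add]; simp
    _ = f s * exp (V t - V s) := by rw [this, mul_assoc, ← exp_add]; ring_nf

theorem sq_add_sq_eq_mul_exp_sub_of_hasDerivAt {f h g V : ℝ → ℝ}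
    (hf : ∀ t, HasDerivAt f (g t * f t) t) (hh : ∀ t, HasDerivAt h (g t * h t) t)
    (hV : ∀ t, HasDerivAt V (2 * g t) t) (s t : ℝ) :
    f t ^ 2 + h t ^ 2 = (f s ^ 2 + h s ^ 2) * exp (V t - V s) :=
  eq_mul_exp_sub_of_hasDerivAt
    (fun r => (((hf r).fun_pow 2).fun_add ((hh r).fun_pow 2)).congr_deriv (by ring)) hV s t

theorem mul_exp_half_log_div {A B : ℝ} (hA : 0 < A) (hB : 0 < B) :
    A * exp (1 / 2 * log (B / A)) = √(A * B) := by
  rw [one_div_mul_eq_div, exp_half, exp_log (div_pos hB hA),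
    show A * B = A ^ 2 * (B / A) by field_simp, sqrt_mul (sq_nonneg A), sqrt_sq hA.le]

theorem mul_exp_neg_half_log_div {A B : ℝ} (hA : 0 < A) (hB : 0 < B) :
    B * exp (-(1 / 2 * log (B / A))) = √(A * B) := by
  rw [← mul_neg, ← log_inv, inv_div, mul_exp_half_log_div hB hA, mul_comm]

/-- In the general case `A > 0`, `B > 0`, the substitution
`y = 2U + (1/2)ln(B/A)` reduces the equation to the pendulum-type ODE
`y'' = -√(AB) sinh y` with `y(0) = (1/2)ln(B/A)`, `y'(0) = 2u₃(0)`. -/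
theorem stmt_9 (u₁ u₂ u₃ u₄ u₅ : ℝ → ℝ)
    (h₁ : ∀ t, HasDerivAt u₁ (-(u₃ t * u₅ t)) t)
    (h₂ : ∀ t, HasDerivAt u₂ (u₃ t * u₄ t) t)
    (h₃ : ∀ t, HasDerivAt u₃ (u₁ t * u₅ t - u₂ t * u₄ t) t)
    (h₄ : ∀ t, HasDerivAt u₄ (u₂ t * u₃ t) t)
    (h₅ : ∀ t, HasDerivAt u₅ (-(u₁ t * u₃ t)) t)
    (U : ℝ → ℝ) (hU : ∀ t, U t = ∫ τ in (0:ℝ)..t, u₃ τ)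
    (A B : ℝ)
    (hA : A = (u₁ 0 + u₅ 0) ^ 2 + (u₂ 0 - u₄ 0) ^ 2)
    (hB : B = (u₁ 0 - u₅ 0) ^ 2 + (u₂ 0 + u₄ 0) ^ 2)
    (hApos : 0 < A) (hBpos : 0 < B)
    (y : ℝ → ℝ) (hy : ∀ t, y t = 2 * U t + 1 / 2 * Real.log (B / A)) :
    (∀ t, HasDerivAt y (2 * u₃ t) t) ∧
    (∀ t, HasDerivAt (deriv y) (-(Real.sqrt (A * B) * Real.sinh (y t))) t) ∧
    y 0 = 1 / 2 * Real.log (B / A) ∧ deriv y 0 = 2 * u₃ 0 := by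
  set c := 1 / 2 * log (B / A)
  have hu₃ : Continuous u₃ := continuous_iff_continuousAt.mpr fun t => (h₃ t).continuousAt
  have hy' : ∀ t, HasDerivAt y (2 * u₃ t) t := fun t => by
    rw [funext hy, funext hU]
    exact ((hu₃.integral_hasStrictDerivAt 0 t).hasDerivAt.const_mul 2).add_const c
  have hy₀ : y 0 = c := by simp [hy, hU]
  have hplus : ∀ t, (u₁ t + u₅ t) ^ 2 + (u₂ t - u₄ t) ^ 2 = √(A * B) * exp (-y t) := by
    intro t
    rw [sq_add_sq_eq_mul_exp_sub_of_hasDerivAt (f := fun t => u₁ t + u₅ t)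
      (h := fun t => u₂ t - u₄ t) (g := fun t => -u₃ t) (V := fun t => -y t)
      (fun t => ((h₁ t).fun_add (h₅ t)).congr_deriv (by ring))
      (fun t => ((h₂ t).fun_sub (h₄ t)).congr_deriv (by ring))
      (fun t => (hy' t).neg.congr_deriv (by ring)) 0 t,
      ← hA, hy₀, ← mul_exp_half_log_div hApos hBpos, mul_assoc, ← exp_add]
    congr 2; ring
  have hminus : ∀ t, (u₁ t - u₅ t) ^ 2 + (u₂ t + u₄ t) ^ 2 = √(A * B) * exp (y t) := by
    intro t
    rw [sq_add_sq_eq_mul_exp_sub_of_hasDerivAt (f := fun t => u₁ t - u₅ t)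
      (h := fun t => u₂ t + u₄ t) (g := u₃)
      (fun t => ((h₁ t).fun_sub (h₅ t)).congr_deriv (by ring))
      (fun t => ((h₂ t).fun_add (h₄ t)).congr_deriv (by ring)) hy' 0 t,
      ← hB, hy₀, ← mul_exp_neg_half_log_div hApos hBpos, mul_assoc, ← exp_add]
    congr 2; ring
  refine ⟨hy', fun t => ?_, hy₀, (hy' 0).deriv⟩
  rw [funext fun t => (hy' t).deriv]
  refine ((h₃ t).const_mul 2).congr_deriv ?_
  rw [sinh_eq]
  linear_combination (hplus t - hminus t) / 2
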